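/- Let n ≥ 1 and let a : Fin n → ℝ and T : Fin n → ℝ be functions with a i > 0 and T i > 0 for all i. For a permutation σ of Fin n define the total weighted completion cost C(σ) = ∑_{i=0}^{n-1} a (σ i) · (∑_{k=0}^{i} T (σ k)). If σ is a permutation such that the ratios are nondecreasing along the schedule, i.e. T (σ i) / a (σ i) ≤ T (σ j) / a (σ j) whenever i ≤ j, then C(σ) ≤ C(π) for every permutation π of Fin n. -/
import Mathlib


/-- Smith's rule: a schedule ordered by nondecreasing ratio `T/a` minimizes the
total weighted completion cost `C(σ) = ∑ i, a (σ i) * (∑ k ≤ i, T (σ k))`. -/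
theorem ratio_order_schedule_is_optimal (n : ℕ) (hn : 1 ≤ n)
    (a T : Fin n → ℝ) (ha : ∀ i, 0 < a i) (hT : ∀ i, 0 < T i)
    (C : Equiv.Perm (Fin n) → ℝ)
    (hC : ∀ σ : Equiv.Perm (Fin n),
      C σ = ∑ i : Fin n, a (σ i) * ∑ k ∈ Finset.Iic i, T (σ k))
    (σ : Equiv.Perm (Fin n))
    (hratio : ∀ i j : Fin n, i ≤ j → T (σ i) / a (σ i) ≤ T (σ j) / a (σ j)) :
    ∀ π : Equiv.Perm (Fin n), C σ ≤ C π := by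
  intro π
  set G : Equiv.Perm (Fin n) → Fin n → Fin n → ℝ :=
    fun ρ x y => if ρ.symm y ≤ ρ.symm x then a x * T y else 0 with hG
  have key : ∀ ρ : Equiv.Perm (Fin n), C ρ = ∑ x : Fin n, ∑ y : Fin n, G ρ x y := by
    intro ρ
    rw [hC]
    rw [← Equiv.sum_comp ρ (fun x => ∑ y : Fin n, G ρ x y)]
    refine Finset.sum_congr rfl fun i _ => ?_
    rw [← Equiv.sum_comp ρ (fun y => G ρ (ρ i) y)]
    simp only [hG, Equiv.symm_apply_apply, Finset.mul_sum]
    rw [← Finset.sum_filter]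
    congr 1
    ext k
    simp [Finset.mem_Iic]
  have pair : ∀ x y : Fin n, G σ x y + G σ y x ≤ G π x y + G π y x := by
    intro x y
    by_cases hxy : x = y
    · subst hxy; simp [hG]
    · have hne : ∀ ρ : Equiv.Perm (Fin n), ρ.symm x ≠ ρ.symm y := by
        intro ρ h; exact hxy (ρ.symm.injective h)
      have hmin : G σ x y + G σ y x ≤ a x * T y ∧ G σ x y + G σ y x ≤ a y * T x := by
        rcases le_or_gt (σ.symm y) (σ.symm x) with h1 | h1
        · have h2 : ¬ σ.symm x ≤ σ.symm y :=
            not_le.mpr (lt_of_le_of_ne h1 (hne σ).symm)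
          have hr := hratio (σ.symm y) (σ.symm x) h1
          simp only [Equiv.apply_symm_apply] at hr
          rw [div_le_div_iff₀ (ha y) (ha x)] at hr
          simp only [hG, if_pos h1, if_neg h2, add_zero]
          exact ⟨le_refl _, by linarith⟩
        · have h2 : ¬ σ.symm y ≤ σ.symm x := not_le.mpr h1
          have hr := hratio (σ.symm x) (σ.symm y) h1.le
          simp only [Equiv.apply_symm_apply] at hr
          rw [div_le_div_iff₀ (ha x) (ha y)] at hr
          simp only [hG, if_neg h2, if_pos h1.le, zero_add]
          exact ⟨by linarith, le_refl _⟩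
      rcases le_or_gt (π.symm y) (π.symm x) with h1 | h1
      · have h2 : ¬ π.symm x ≤ π.symm y :=
          not_le.mpr (lt_of_le_of_ne h1 (hne π).symm)
        simp only [hG, if_pos h1, if_neg h2, add_zero]
        exact hmin.1
      · have h2 : ¬ π.symm y ≤ π.symm x := not_le.mpr h1
        simp only [hG, if_neg h2, if_pos h1.le, zero_add]
        exact hmin.2
  have hsum : (∑ x : Fin n, ∑ y : Fin n, (G σ x y + G σ y x)) ≤
      ∑ x : Fin n, ∑ y : Fin n, (G π x y + G π y x) :=
    Finset.sum_le_sum fun x _ => Finset.sum_le_sum fun y _ => pair x y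
  have expand : ∀ ρ : Equiv.Perm (Fin n),
      (∑ x : Fin n, ∑ y : Fin n, (G ρ x y + G ρ y x)) = 2 * C ρ := by
    intro ρ
    rw [key ρ]
    simp only [Finset.sum_add_distrib]
    rw [Finset.sum_comm (f := fun x y => G ρ y x)]
    ring
  rw [expand, expand] at hsum
  linarith
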